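/- Let f_d = Σ_{i=1}^m c_i x^{α_i} − d·x^β ∈ ℝ[x_1,…,x_n] with α_i ∈ (2ℕ)^n, c_i > 0 for i = 1,…,m, β ∈ New(f_d)° ∩ ℕ^n, and dim(New(f_d)) = n. Let d* := sup{d ∈ ℝ : f_d is nonnegative on ℝ^n}. Then f_d is nonnegative on ℝ^n if and only if either β ∈ (2ℕ)^n and d ≤ d*, or β ∉ (2ℕ)^n and |d| ≤ d*. Moreover, the polynomial f_{d*} has exactly one zero in the open positive orthant ℝ_+^n. -/

import Mathlib

open MvPolynomial Classical

noncomputable section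

/-- The real point associated to an exponent vector. -/
def toR {n : ℕ} (α : Fin n →₀ ℕ) : Fin n → ℝ := fun j => (α j : ℝ)

/-- A lattice point is even if all its coordinates are even, i.e. it lies in `(2ℕ)^n`. -/
def IsEvenPt {n : ℕ} (α : Fin n →₀ ℕ) : Prop := ∀ j, Even (α j)

/-- The Newton polytope of a polynomial: the convex hull of its support. -/
def newton {n : ℕ} (f : MvPolynomial (Fin n) ℝ) : Set (Fin n → ℝ) :=
  convexHull ℝ (toR '' (f.support : Set (Fin n →₀ ℕ)))

/-- A polynomial is nonnegative (PSD) if it is nonnegative at every real point. -/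
def Nonneg {n : ℕ} (f : MvPolynomial (Fin n) ℝ) : Prop :=
  ∀ x : Fin n → ℝ, 0 ≤ eval x f


/-! On the positive orthant substitute `x = exp y`: then
`f_d (exp y) = exp ⟨β, y⟩ * (G y - d)` with `G y = ∑ c_i exp ⟨α_i - β, y⟩`. Since `β` is an
interior point of the Newton polytope, every direction `y` has some `⟨α_i - β, y⟩ ≥ ε ‖y‖`, so
`G` is coercive and the vectors `α_i - β` span, making `G` strictly convex. Hence `G` has a unique
minimiser `y₀`, `f_d ≥ 0` on the positive orthant iff `d ≤ G y₀`, and `f_{G y₀}` vanishes there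
exactly at `exp y₀`. Off the orthant, evenness of the `α_i` gives `f_d (x) ≥ f_{|d|} (|x|)`, and
`β` has positive coordinates so `x^β = 0` when some `x_j = 0`; if some `β_j` is odd, flipping the
sign of `x_j` exchanges `f_d` and `f_{-d}`. This identifies `d* = G y₀`.
-/

open Filter Set

section MonomialValue

variable {ι : Type*} [Fintype ι]

def monomialValue (a : ι →₀ ℕ) (x : ι → ℝ) : ℝ := ∏ j, x j ^ a j

theorem eval_monomial_eq_mul_monomialValue {n : ℕ} (a : Fin n →₀ ℕ) (r : ℝ) (x : Fin n → ℝ) :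
    eval x (monomial a r) = r * monomialValue a x := by
  rw [eval_monomial, Finsupp.prod_fintype _ _ fun j => pow_zero (x j)]
  rfl

theorem monomialValue_nonneg_of_even {a : ι →₀ ℕ} (ha : ∀ j, Even (a j)) (x : ι → ℝ) :
    0 ≤ monomialValue a x :=
  Finset.prod_nonneg fun j _ => (ha j).pow_nonneg _

theorem monomialValue_abs_of_even {a : ι →₀ ℕ} (ha : ∀ j, Even (a j)) (x : ι → ℝ) :
    monomialValue a |x| = monomialValue a x :=
  Finset.prod_congr rfl fun j _ => (ha j).pow_abs _

theorem abs_monomialValue (a : ι →₀ ℕ) (x : ι → ℝ) : |monomialValue a x| = monomialValue a |x| := by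
  simp only [monomialValue, Finset.abs_prod, abs_pow, Pi.abs_apply]

theorem monomialValue_eq_zero {a : ι →₀ ℕ} {x : ι → ℝ} {j : ι} (hx : x j = 0) (ha : a j ≠ 0) :
    monomialValue a x = 0 :=
  Finset.prod_eq_zero (Finset.mem_univ j) (by rw [hx, zero_pow ha])

theorem monomialValue_mul (a : ι →₀ ℕ) (x y : ι → ℝ) :
    monomialValue a (x * y) = monomialValue a x * monomialValue a y := by
  simp only [monomialValue, Pi.mul_apply, mul_pow, Finset.prod_mul_distrib]

theorem monomialValue_mulSingle_neg_one [DecidableEq ι] (a : ι →₀ ℕ) (j : ι) :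
    monomialValue a (Pi.mulSingle j (-1)) = (-1) ^ a j := by
  rw [monomialValue, Fintype.prod_eq_single j fun k hk => by rw [Pi.mulSingle_eq_of_ne hk, one_pow],
    Pi.mulSingle_eq_same]

theorem monomialValue_exp (a : ι →₀ ℕ) (y : ι → ℝ) :
    monomialValue a (Real.exp ∘ y) = Real.exp ((fun j => (a j : ℝ)) ⬝ᵥ y) := by
  simp only [monomialValue, dotProduct, Real.exp_sum, Function.comp_apply, ← Real.exp_nat_mul]

end MonomialValue

section ConvexHull

variable {ι κ : Type*} [Fintype ι]

theorem sq_norm_le_dotProduct_self (y : ι → ℝ) : ‖y‖ ^ 2 ≤ y ⬝ᵥ y := by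
  have hsum : 0 ≤ y ⬝ᵥ y := Finset.sum_nonneg fun j _ => mul_self_nonneg (y j)
  have : ‖y‖ ≤ √(y ⬝ᵥ y) := (pi_norm_le_iff_of_nonneg (Real.sqrt_nonneg _)).2 fun j =>
    Real.abs_le_sqrt <| (sq (y j)).trans_le <|
      Finset.single_le_sum (f := fun k => y k * y k) (fun k _ => mul_self_nonneg (y k))
        (Finset.mem_univ j)
  calc ‖y‖ ^ 2 ≤ √(y ⬝ᵥ y) ^ 2 := pow_le_pow_left₀ (norm_nonneg y) this 2
    _ = y ⬝ᵥ y := Real.sq_sqrt hsum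

theorem exists_mul_norm_le_sub_dotProduct_of_mem_interior_convexHull {p : κ → ι → ℝ}
    {b : ι → ℝ} (hb : b ∈ interior (convexHull ℝ (range p))) :
    ∃ ε > 0, ∀ y : ι → ℝ, ∃ k, ε * ‖y‖ ≤ (p k - b) ⬝ᵥ y := by
  obtain ⟨r, hr, hball⟩ := Metric.mem_nhds_iff.1 (mem_interior_iff_mem_nhds.1 hb)
  refine ⟨r / 2, by positivity, fun y => ?_⟩
  -- `t = 0` when `y = 0`, by the convention `r / 0 = 0`
  set t := r / 2 / ‖y‖
  have hty : t * ‖y‖ ^ 2 = r / 2 * ‖y‖ := by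
    rcases eq_or_ne ‖y‖ 0 with h | h
    · simp [h]
    · simp only [t]; field_simp
  have hmem : b + t • y ∈ convexHull ℝ (range p) := by
    refine hball (mem_ball_iff_norm.2 ?_)
    rw [add_sub_cancel_left, norm_smul, Real.norm_of_nonneg (by positivity)]
    rcases eq_or_ne ‖y‖ 0 with h | h
    · simpa [h] using hr
    · rw [div_mul_cancel₀ _ h]; linarith
  obtain ⟨_, ⟨k, rfl⟩, hk⟩ :=
    ((dotProductEquiv ℝ ι y).convexOn convex_univ).exists_ge_of_mem_convexHull (subset_univ _) hmem
  refine ⟨k, ?_⟩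
  simp only [dotProductEquiv_apply_apply, dotProduct_add, dotProduct_smul, smul_eq_mul] at hk
  have := mul_le_mul_of_nonneg_left (sq_norm_le_dotProduct_self y) (by positivity : 0 ≤ t)
  rw [sub_dotProduct, dotProduct_comm (p k), dotProduct_comm b]
  linarith

theorem pos_of_mem_interior_convexHull {p : κ → ι → ℝ} (hp : ∀ k j, 0 ≤ p k j) {b : ι → ℝ}
    (hb : b ∈ interior (convexHull ℝ (range p))) (j : ι) : 0 < b j := by
  obtain ⟨ε, hε, h⟩ := exists_mul_norm_le_sub_dotProduct_of_mem_interior_convexHull hb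
  obtain ⟨k, hk⟩ := h (-Pi.single j 1)
  simp only [norm_neg, Pi.norm_single, norm_one, mul_one, dotProduct_neg, dotProduct_single,
    Pi.sub_apply] at hk
  linarith [hp k j]

end ConvexHull

section ExpSum

variable {ι κ : Type*} [Fintype ι] [Fintype κ] {c : κ → ℝ} {v : κ → ι → ℝ}

def expSum (c : κ → ℝ) (v : κ → ι → ℝ) (y : ι → ℝ) : ℝ := ∑ k, c k * Real.exp (v k ⬝ᵥ y)

theorem expSum_nonneg (hc : ∀ k, 0 ≤ c k) (y : ι → ℝ) : 0 ≤ expSum c v y :=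
  Finset.sum_nonneg fun k _ => mul_nonneg (hc k) (Real.exp_pos _).le

theorem continuous_expSum (c : κ → ℝ) (v : κ → ι → ℝ) : Continuous (expSum c v) := by
  change Continuous fun y : ι → ℝ => ∑ k, c k * Real.exp (∑ j, v k j * y j)
  fun_prop

theorem strictConvexOn_expSum (hc : ∀ k, 0 < c k) (hv : ∀ w, (∀ k, v k ⬝ᵥ w = 0) → w = 0) :
    StrictConvexOn ℝ univ (expSum c v) := by
  refine ⟨convex_univ, fun y _ z _ hyz a b ha hb hab => ?_⟩
  obtain ⟨k₀, hk₀⟩ : ∃ k, v k ⬝ᵥ y ≠ v k ⬝ᵥ z := by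
    by_contra! h
    exact hyz (sub_eq_zero.1 (hv _ fun k => by rw [dotProduct_sub, h k, sub_self]))
  have hterm : ∀ k, c k * Real.exp (v k ⬝ᵥ (a • y + b • z)) ≤
      a * (c k * Real.exp (v k ⬝ᵥ y)) + b * (c k * Real.exp (v k ⬝ᵥ z)) := fun k => by
    have := convexOn_exp.2 (mem_univ (v k ⬝ᵥ y)) (mem_univ (v k ⬝ᵥ z)) ha.le hb.le hab
    simp only [smul_eq_mul, dotProduct_add, dotProduct_smul] at this ⊢
    nlinarith [hc k]
  have hterm₀ : c k₀ * Real.exp (v k₀ ⬝ᵥ (a • y + b • z)) <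
      a * (c k₀ * Real.exp (v k₀ ⬝ᵥ y)) + b * (c k₀ * Real.exp (v k₀ ⬝ᵥ z)) := by
    have := strictConvexOn_exp.2 (mem_univ (v k₀ ⬝ᵥ y)) (mem_univ (v k₀ ⬝ᵥ z)) hk₀ ha hb hab
    simp only [smul_eq_mul, dotProduct_add, dotProduct_smul] at this ⊢
    nlinarith [hc k₀]
  simp only [expSum, smul_eq_mul, Finset.mul_sum, ← Finset.sum_add_distrib]
  exact Finset.sum_lt_sum (fun k _ => hterm k) ⟨k₀, Finset.mem_univ _, hterm₀⟩

theorem tendsto_expSum_cocompact (hc : ∀ k, 0 < c k) {ε : ℝ} (hε : 0 < ε)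
    (hv : ∀ y, ∃ k, ε * ‖y‖ ≤ v k ⬝ᵥ y) : Tendsto (expSum c v) (cocompact _) atTop := by
  obtain ⟨k₁, -⟩ := hv 0
  have : Nonempty κ := ⟨k₁⟩
  obtain ⟨k₀, hk₀⟩ := Finite.exists_min c
  have hlower : ∀ y, c k₀ * Real.exp (ε * ‖y‖) ≤ expSum c v y := fun y => by
    obtain ⟨k, hk⟩ := hv y
    calc c k₀ * Real.exp (ε * ‖y‖) ≤ c k * Real.exp (v k ⬝ᵥ y) :=
          mul_le_mul (hk₀ k) (Real.exp_le_exp.2 hk) (Real.exp_pos _).le (hc k).le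
      _ ≤ expSum c v y := Finset.single_le_sum (f := fun k => c k * Real.exp (v k ⬝ᵥ y))
          (fun k _ => mul_nonneg (hc k).le (Real.exp_pos _).le) (Finset.mem_univ k)
  refine tendsto_atTop_mono hlower (Tendsto.const_mul_atTop (hc k₀) ?_)
  exact Real.tendsto_exp_atTop.comp (tendsto_norm_cocompact_atTop.const_mul_atTop hε)

end ExpSum

section MonomialSumSub

variable {n m : ℕ} {c : Fin m → ℝ} {α : Fin m → Fin n →₀ ℕ} {β : Fin n →₀ ℕ}

variable (α β) in
def exponentDiff (i : Fin m) : Fin n → ℝ := toR (α i) - toR β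

variable (c α β) in
def monomialSumSub (d : ℝ) : MvPolynomial (Fin n) ℝ := ∑ i, monomial (α i) (c i) - monomial β d

theorem eval_monomialSumSub (d : ℝ) (x : Fin n → ℝ) :
    eval x (monomialSumSub c α β d) = ∑ i, c i * monomialValue (α i) x - d * monomialValue β x := by
  simp only [monomialSumSub, map_sub, map_sum, eval_monomial_eq_mul_monomialValue]

theorem eval_exp_monomialSumSub (d : ℝ) (y : Fin n → ℝ) :
    eval (Real.exp ∘ y) (monomialSumSub c α β d) =
      Real.exp (toR β ⬝ᵥ y) * (expSum c (exponentDiff α β) y - d) := by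
  simp only [eval_monomialSumSub, monomialValue_exp, expSum, exponentDiff, sub_dotProduct,
    Real.exp_sub, mul_sub, Finset.mul_sum]
  congr 1
  · refine Finset.sum_congr rfl fun i _ => ?_
    rw [mul_left_comm, mul_div_cancel₀ _ (Real.exp_pos _).ne']
    rfl
  · rw [mul_comm]; rfl

theorem le_expSum_of_nonneg {d : ℝ} (h : Nonneg (monomialSumSub c α β d)) (y : Fin n → ℝ) :
    d ≤ expSum c (exponentDiff α β) y := by
  have := h (Real.exp ∘ y)
  rw [eval_exp_monomialSumSub] at this
  exact sub_nonneg.1 ((mul_nonneg_iff_of_pos_left (Real.exp_pos _)).1 this)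

theorem eval_abs_le_eval_monomialSumSub (hα : ∀ i, IsEvenPt (α i)) (d : ℝ) (x : Fin n → ℝ) :
    eval |x| (monomialSumSub c α β |d|) ≤ eval x (monomialSumSub c α β d) := by
  have : d * monomialValue β x ≤ |d| * monomialValue β |x| :=
    calc d * monomialValue β x ≤ |d * monomialValue β x| := le_abs_self _
      _ = |d| * monomialValue β |x| := by rw [abs_mul, abs_monomialValue]
  simp only [eval_monomialSumSub, monomialValue_abs_of_even (hα _)]
  linarith

theorem nonneg_monomialSumSub_of_forall_abs_le (hα : ∀ i, IsEvenPt (α i)) (hc : ∀ i, 0 < c i)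
    (hβ : ∀ j, 0 < β j) {d : ℝ} (hd : ∀ y, |d| ≤ expSum c (exponentDiff α β) y) :
    Nonneg (monomialSumSub c α β d) := by
  intro x
  by_cases hx : ∀ j, x j ≠ 0
  · have hlog : |x| = Real.exp ∘ fun j => Real.log |x j| :=
      funext fun j => (Real.exp_log (abs_pos.2 (hx j))).symm
    refine le_trans ?_ (eval_abs_le_eval_monomialSumSub hα d x)
    rw [hlog, eval_exp_monomialSumSub]
    exact mul_nonneg (Real.exp_pos _).le (sub_nonneg.2 (hd _))
  · obtain ⟨j, hj⟩ : ∃ j, x j = 0 := by simpa using hx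
    rw [eval_monomialSumSub, monomialValue_eq_zero hj (hβ j).ne', mul_zero, sub_zero]
    exact Finset.sum_nonneg fun i _ => mul_nonneg (hc i).le (monomialValue_nonneg_of_even (hα i) x)

theorem nonneg_monomialSumSub_of_nonpos (hα : ∀ i, IsEvenPt (α i)) (hc : ∀ i, 0 < c i)
    (hβ : IsEvenPt β) {d : ℝ} (hd : d ≤ 0) : Nonneg (monomialSumSub c α β d) := by
  intro x
  have hα' : 0 ≤ ∑ i, c i * monomialValue (α i) x :=
    Finset.sum_nonneg fun i _ => mul_nonneg (hc i).le (monomialValue_nonneg_of_even (hα i) x)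
  have hβ' := monomialValue_nonneg_of_even hβ x
  rw [eval_monomialSumSub]
  nlinarith

theorem Nonneg.neg_of_not_isEvenPt (hα : ∀ i, IsEvenPt (α i)) (hβ : ¬IsEvenPt β) {d : ℝ}
    (h : Nonneg (monomialSumSub c α β d)) : Nonneg (monomialSumSub c α β (-d)) := by
  obtain ⟨j, hj⟩ : ∃ j, Odd (β j) := by simpa [IsEvenPt] using hβ
  intro x
  have := h (Pi.mulSingle j (-1) * x)
  simpa [eval_monomialSumSub, monomialValue_mul, monomialValue_mulSingle_neg_one,
    (hα _ j).neg_one_pow, hj.neg_one_pow] using this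

end MonomialSumSub

section Minimum

variable {n m : ℕ} {c : Fin m → ℝ} {α : Fin m → Fin n →₀ ℕ} {β : Fin n →₀ ℕ} {y₀ : Fin n → ℝ}

theorem nonneg_monomialSumSub_iff (hα : ∀ i, IsEvenPt (α i)) (hc : ∀ i, 0 < c i)
    (hβ : ∀ j, 0 < β j)
    (hy₀ : ∀ y, expSum c (exponentDiff α β) y₀ ≤ expSum c (exponentDiff α β) y) (d : ℝ) :
    Nonneg (monomialSumSub c α β d) ↔
      (IsEvenPt β ∧ d ≤ expSum c (exponentDiff α β) y₀) ∨
      (¬IsEvenPt β ∧ |d| ≤ expSum c (exponentDiff α β) y₀) := by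
  have hsmall : |d| ≤ expSum c (exponentDiff α β) y₀ → Nonneg (monomialSumSub c α β d) :=
    fun h => nonneg_monomialSumSub_of_forall_abs_le hα hc hβ fun y => h.trans (hy₀ y)
  by_cases hβe : IsEvenPt β
  · simp only [hβe, true_and, not_true_eq_false, false_and, or_false]
    refine ⟨fun h => le_expSum_of_nonneg h y₀, fun h => ?_⟩
    rcases le_or_gt d 0 with hd | hd
    · exact nonneg_monomialSumSub_of_nonpos hα hc hβe hd
    · exact hsmall (by rwa [abs_of_pos hd])
  · simp only [hβe, false_and, not_false_eq_true, true_and, false_or]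
    refine ⟨fun h => abs_le.2 ⟨?_, le_expSum_of_nonneg h y₀⟩, hsmall⟩
    linarith [le_expSum_of_nonneg (h.neg_of_not_isEvenPt hα hβe) y₀]

theorem sSup_nonneg_monomialSumSub (hα : ∀ i, IsEvenPt (α i)) (hc : ∀ i, 0 < c i)
    (hβ : ∀ j, 0 < β j)
    (hy₀ : ∀ y, expSum c (exponentDiff α β) y₀ ≤ expSum c (exponentDiff α β) y) :
    sSup {d | Nonneg (monomialSumSub c α β d)} = expSum c (exponentDiff α β) y₀ := by
  by_cases hβe : IsEvenPt β
  · have : {d | Nonneg (monomialSumSub c α β d)} = Iic (expSum c (exponentDiff α β) y₀) := by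
      ext d
      simp [nonneg_monomialSumSub_iff hα hc hβ hy₀, hβe]
    rw [this, csSup_Iic]
  · have : {d | Nonneg (monomialSumSub c α β d)} =
        Icc (-expSum c (exponentDiff α β) y₀) (expSum c (exponentDiff α β) y₀) := by
      ext d
      simp [nonneg_monomialSumSub_iff hα hc hβ hy₀, hβe, abs_le]
    rw [this, csSup_Icc (neg_le_self (expSum_nonneg (fun i => (hc i).le) y₀))]

theorem existsUnique_pos_eval_monomialSumSub_eq_zero
    (hG : StrictConvexOn ℝ univ (expSum c (exponentDiff α β)))
    (hy₀ : ∀ y, expSum c (exponentDiff α β) y₀ ≤ expSum c (exponentDiff α β) y) :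
    ∃! x : Fin n → ℝ, (∀ j, 0 < x j) ∧
      eval x (monomialSumSub c α β (expSum c (exponentDiff α β) y₀)) = 0 := by
  refine ⟨Real.exp ∘ y₀, ⟨fun j => Real.exp_pos _, ?_⟩, ?_⟩
  · rw [eval_exp_monomialSumSub, sub_self, mul_zero]
  rintro x ⟨hx, hx₀⟩
  have hlog : x = Real.exp ∘ (Real.log ∘ x) := funext fun j => (Real.exp_log (hx j)).symm
  rw [hlog, eval_exp_monomialSumSub, mul_eq_zero, sub_eq_zero] at hx₀
  have hmin := hx₀.resolve_left (Real.exp_pos _).ne'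
  rw [hlog, hG.eq_of_isMinOn (fun y _ => hmin.le.trans (hy₀ y)) (fun y _ => hy₀ y) trivial trivial]

end Minimum

theorem stmt2_general {n m : ℕ} (c : Fin m → ℝ) (α : Fin m → (Fin n →₀ ℕ)) (β : Fin n →₀ ℕ)
    (hα : ∀ i, IsEvenPt (α i)) (hc : ∀ i, 0 < c i)
    (F : ℝ → MvPolynomial (Fin n) ℝ)
    (hF : ∀ d : ℝ, F d = (∑ i, monomial (α i) (c i)) - monomial β d)
    (hβ : toR β ∈ interior (convexHull ℝ (toR '' Set.range α)))
    (dstar : ℝ) (hdstar : dstar = sSup {d : ℝ | Nonneg (F d)}) :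
    (∀ d : ℝ, Nonneg (F d) ↔
      ((IsEvenPt β ∧ d ≤ dstar) ∨ (¬ IsEvenPt β ∧ |d| ≤ dstar))) ∧
    (∃! x : Fin n → ℝ, (∀ j, 0 < x j) ∧ eval x (F dstar) = 0) := by
  obtain rfl : F = monomialSumSub c α β := funext hF
  rw [← range_comp] at hβ
  have hβpos : ∀ j, 0 < β j := fun j =>
    Nat.cast_pos.1 (pos_of_mem_interior_convexHull (fun i j => Nat.cast_nonneg _) hβ j)
  obtain ⟨ε, hε, hcoer⟩ := exists_mul_norm_le_sub_dotProduct_of_mem_interior_convexHull hβ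
  have hinj : ∀ w, (∀ i, exponentDiff α β i ⬝ᵥ w = 0) → w = 0 := fun w hw => by
    obtain ⟨i, hi⟩ := hcoer w
    exact norm_le_zero_iff.1 (nonpos_of_mul_nonpos_right (hi.trans_eq (hw i)) hε)
  obtain ⟨y₀, hy₀⟩ :=
    (continuous_expSum c _).exists_forall_le (tendsto_expSum_cocompact hc hε hcoer)
  obtain rfl := hdstar.trans (sSup_nonneg_monomialSumSub hα hc hβpos hy₀)
  exact ⟨nonneg_monomialSumSub_iff hα hc hβpos hy₀,
    existsUnique_pos_eval_monomialSumSub_eq_zero (strictConvexOn_expSum hc hinj) hy₀⟩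

/-- For `f_d = ∑ c_i x^{α_i} − d x^β` with even `α_i`, `c_i > 0`,
`β` an interior lattice point of the Newton polytope, and full-dimensional Newton polytope,
setting `d* = sup{d : f_d is PSD}`, we have: `f_d` is PSD iff (`β` is even and `d ≤ d*`) or
(`β` is not even and `|d| ≤ d*`); moreover `f_{d*}` has exactly one zero in the open positive
orthant. -/
theorem stmt2 {n m : ℕ} (c : Fin m → ℝ) (α : Fin m → (Fin n →₀ ℕ)) (β : Fin n →₀ ℕ)
    (hα : ∀ i, IsEvenPt (α i)) (hc : ∀ i, 0 < c i)
    (F : ℝ → MvPolynomial (Fin n) ℝ)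
    (hF : ∀ d : ℝ, F d = (∑ i, monomial (α i) (c i)) - monomial β d)
    (hβ : toR β ∈ interior (convexHull ℝ (toR '' Set.range α)))
    (hdim : affineSpan ℝ (toR '' Set.range α) = ⊤)
    (dstar : ℝ) (hdstar : dstar = sSup {d : ℝ | Nonneg (F d)}) :
    (∀ d : ℝ, Nonneg (F d) ↔
      ((IsEvenPt β ∧ d ≤ dstar) ∨ (¬ IsEvenPt β ∧ |d| ≤ dstar))) ∧
    (∃! x : Fin n → ℝ, (∀ j, 0 < x j) ∧ eval x (F dstar) = 0) :=
  stmt2_general c α β hα hc F hF hβ dstar hdstar
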